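/- Let B and K be positive integers and let f : {1,...,K} → ℕ satisfy ∑_{i=1}^K f(i) ≤ B·K. If 4B·|{i : f(i) ≥ 2B}| > K, then there exists a natural number M with M ≤ 2B−2 such that 4B·|{i : f(i) ≤ M}| > (2M+1)·K. -/

import Mathlib

/-!
Suppose no `M ≤ 2B - 2` works and put `n = 2B - 1`. For each level `m < n` at least
`K - (2m+1)K/(4B)` users have `f i > m`, and by layer-cake counting
`∑ i, f i ≥ ∑_{m < n} #{i | m < f i} + #{i | 2B ≤ f i}`. Summing the odd numbers
`2m + 1` gives `4B · ∑ i, f i > 4B·nK - n²K + K = (2B)²K`, contradicting `∑ i, f i ≤ BK`.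
-/

open Finset

theorem sum_range_two_mul_add_one (n : ℕ) : ∑ m ∈ range n, (2 * m + 1) = n * n := by
  induction n with
  | zero => rfl
  | succ n ih => rw [sum_range_succ, ih]; ring

theorem card_filter_le_add_card_filter_lt {ι α : Type*} [LinearOrder α] (s : Finset ι)
    (f : ι → α) (a : α) : #{i ∈ s | f i ≤ a} + #{i ∈ s | a < f i} = #s := by
  simpa only [not_le] using card_filter_add_card_filter_not (s := s) (fun i => f i ≤ a)

theorem sum_card_filter_lt_le_sum {ι : Type*} (s : Finset ι) (f : ι → ℕ) (n : ℕ) :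
    ∑ m ∈ range n, #{i ∈ s | m < f i} ≤ ∑ i ∈ s, f i :=
  calc ∑ m ∈ range n, #{i ∈ s | m < f i} = ∑ i ∈ s, #{m ∈ range n | m < f i} := by
        simp only [card_filter]; exact sum_comm
    _ ≤ ∑ i ∈ s, f i := sum_le_sum fun i _ =>
        (card_le_card fun m hm => mem_range.2 (mem_filter.1 hm).2).trans_eq (card_range _)

theorem backhaul_counting_step_general (B K : ℕ)
    (f : Fin K → ℕ) (hsum : ∑ i, f i ≤ B * K)
    (hbig : K < 4 * B * (Finset.univ.filter (fun i => 2 * B ≤ f i)).card) :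
    ∃ M : ℕ, M ≤ 2 * B - 2 ∧
      (2 * M + 1) * K < 4 * B * (Finset.univ.filter (fun i => f i ≤ M)).card := by
  by_contra! hsmall
  have hB : B ≠ 0 := by rintro rfl; simp at hbig
  obtain ⟨n, hn⟩ : ∃ n, 2 * B = n + 1 := ⟨2 * B - 1, by omega⟩
  have hlow : 4 * B * ∑ m ∈ range n, #{i | f i ≤ m} ≤ n * n * K := by
    rw [mul_sum, ← sum_range_two_mul_add_one, sum_mul]
    exact sum_le_sum fun m hm => hsmall m (by rw [mem_range] at hm; omega)
  have hsplit : ∑ m ∈ range n, #{i | f i ≤ m} + ∑ m ∈ range n, #{i | m < f i} = n * K := by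
    simp [← sum_add_distrib, card_filter_le_add_card_filter_lt]
  have hhigh : ∑ m ∈ range n, #{i | m < f i} + #{i | n < f i} ≤ B * K := by
    rw [← sum_range_succ]
    exact (sum_card_filter_lt_le_sum _ f _).trans hsum
  rw [hn] at hbig
  simp only [Nat.add_one_le_iff] at hbig
  have h4B : 4 * B = 2 * (n + 1) := by omega
  rw [h4B] at hlow hbig
  generalize ∑ m ∈ range n, #{i | f i ≤ m} = L at *
  generalize ∑ m ∈ range n, #{i | m < f i} = U at *
  generalize #{i | n < f i} = S at *
  nlinarith

/-- If `f : Fin K → ℕ` satisfies `∑ i, f i ≤ B * K` and more than a `1/(4B)`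
fraction of indices have `f i ≥ 2B`, then for some `M ≤ 2B - 2` more than a
`(2M+1)/(4B)` fraction of indices have `f i ≤ M`. -/
theorem backhaul_counting_step (B K : ℕ) (hB : 0 < B) (hK : 0 < K)
    (f : Fin K → ℕ) (hsum : ∑ i, f i ≤ B * K)
    (hbig : K < 4 * B * (Finset.univ.filter (fun i => 2 * B ≤ f i)).card) :
    ∃ M : ℕ, M ≤ 2 * B - 2 ∧
      (2 * M + 1) * K < 4 * B * (Finset.univ.filter (fun i => f i ≤ M)).card :=
  backhaul_counting_step_general B K f hsum hbig
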